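/- arXiv:1810.03117 — 2 statements merged into one kernel-verified Lean document; each statement's English description precedes it below -/
import Mathlib

section
/- Let C be a monoidal category whose underlying category is a groupoid, with unit object 𝟙, and let a be an object of C such that Hom(𝟙, a) is nonempty. Then for any two morphisms x, y : 𝟙 ⟶ a there exists a unique morphism g : 𝟙 ⟶ 𝟙 such that (λ_𝟙).inv ≫ (g ⊗ x) ≫ (λ_a).hom = y. In other words, the action of End(𝟙) on Hom(𝟙, a) defined by g · x := (λ_𝟙).inv ≫ (g ⊗ x) ≫ (λ_a).hom is free and transitive, so Hom(𝟙, a) is an End(𝟙)-torsor. -/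
open CategoryTheory MonoidalCategory

theorem leftUnitor_inv_comp_tensorHom_comp_leftUnitor_hom {C : Type*} [Category C]
    [MonoidalCategory C] {a : C} (g : 𝟙_ C ⟶ 𝟙_ C) (f : 𝟙_ C ⟶ a) :
    (λ_ (𝟙_ C)).inv ≫ (g ⊗ₘ f) ≫ (λ_ a).hom = g ≫ f :=
  calc (λ_ (𝟙_ C)).inv ≫ (g ⊗ₘ f) ≫ (λ_ a).hom
      = ((ρ_ (𝟙_ C)).inv ≫ g ▷ 𝟙_ C) ≫ (𝟙_ C ◁ f ≫ (λ_ a).hom) := by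
        rw [MonoidalCategory.tensorHom_def, unitors_inv_equal, Category.assoc, Category.assoc]
    _ = (g ≫ (ρ_ (𝟙_ C)).inv) ≫ ((λ_ (𝟙_ C)).hom ≫ f) := by
        rw [rightUnitor_inv_naturality, leftUnitor_naturality]
    _ = g ≫ f := by
        rw [unitors_equal, Category.assoc, Iso.inv_hom_id_assoc]

theorem hom_unit_is_torsor_general
    {C : Type*} [Groupoid C] [MonoidalCategory C]
    (a : C) :
    ∀ x y : 𝟙_ C ⟶ a, ∃! g : 𝟙_ C ⟶ 𝟙_ C,
      (λ_ (𝟙_ C)).inv ≫ (g ⊗ₘ x) ≫ (λ_ a).hom = y := by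
  intro x y
  simp only [leftUnitor_inv_comp_tensorHom_comp_leftUnitor_hom]
  exact (asIso x).homToEquiv.bijective.existsUnique y

/-- In a monoidal groupoid, if `Hom(𝟙, a)` is nonempty then the action of `End(𝟙)` on
`Hom(𝟙, a)` given by `g · x = (λ_𝟙).inv ≫ (g ⊗ x) ≫ (λ_a).hom` is free and transitive:
for all `x y : 𝟙 ⟶ a` there is a unique `g : 𝟙 ⟶ 𝟙` with `g · x = y`. So `Hom(𝟙, a)`
is an `End(𝟙)`-torsor. -/
theorem hom_unit_is_torsor
    {C : Type*} [Groupoid C] [MonoidalCategory C]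
    (a : C) (hne : Nonempty (𝟙_ C ⟶ a)) :
    ∀ x y : 𝟙_ C ⟶ a, ∃! g : 𝟙_ C ⟶ 𝟙_ C,
      (λ_ (𝟙_ C)).inv ≫ (g ⊗ₘ x) ≫ (λ_ a).hom = y :=
  hom_unit_is_torsor_general a
end

section
/- Let A and B be C*-algebras over ℂ. Consider the simplicial set HOM(A, B) whose set of n-simplices is the set of ⋆-algebra homomorphisms from A to the C*-algebra C(Δⁿ, B) of continuous B-valued functions on the standard topological n-simplex Δⁿ = {t : Fin (n+1) → ℝ | tᵢ ≥ 0, ∑ tᵢ = 1} (with pointwise operations and supremum norm), with face and degeneracy maps induced by the affine maps between standard topological simplices coming from the morphisms of the simplex category. Then HOM(A, B) is a Kan complex: for all n ≥ 1, 0 ≤ i ≤ n, every map of simplicial sets from the horn Λⁿᵢ to HOM(A, B) extends along the inclusion Λⁿᵢ ↪ Δ[n] to a map Δ[n] → HOM(A, B). -/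
open CategoryTheory Simplicial

noncomputable section

variable {X Y : Type*} [TopologicalSpace X] [TopologicalSpace Y]

/-- Pre-composition with a continuous map `f : X → Y`, as a non-unital ⋆-algebra
homomorphism `C(Y, B) → C(X, B)`. -/
def precompStarHom (B : Type*) [NonUnitalCStarAlgebra B] (f : C(X, Y)) :
    C(Y, B) →⋆ₙₐ[ℂ] C(X, B) where
  toFun g := g.comp f
  map_smul' _ _ := rfl
  map_zero' := ContinuousMap.zero_comp f
  map_add' _ _ := rfl
  map_mul' _ _ := rfl
  map_star' _ := rfl

/-- The simplicial set `HOM(A, B)` of Definition 10.1: its `n`-simplices are the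
⋆-homomorphisms `A → C(Δⁿ, B)` into the C*-algebra of continuous `B`-valued functions on
the standard topological `n`-simplex, with face and degeneracy maps induced by the affine
maps between topological simplices. -/
def HOMC (A B : Type*) [NonUnitalCStarAlgebra A] [NonUnitalCStarAlgebra B] : SSet where
  obj n := A →⋆ₙₐ[ℂ] C((SimplexCategory.toTop.{0}.obj n.unop), B)
  map f := TypeCat.ofHom fun φ => (precompStarHom B (SimplexCategory.toTop.{0}.map f.unop).hom).comp φ
  map_id n := by
    ext φ a t
    show (φ a) (SimplexCategory.toTop.{0}.map (𝟙 n.unop) t) = (φ a) t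
    rw [SimplexCategory.toTop.map_id]
    rfl
  map_comp f g := by
    ext φ a t
    show (φ a) (SimplexCategory.toTop.{0}.map (g.unop ≫ f.unop) t) =
      (φ a) (SimplexCategory.toTop.{0}.map f.unop (SimplexCategory.toTop.{0}.map g.unop t))
    rw [SimplexCategory.toTop.map_comp]
    rfl

/-!
With the point-norm topology on `A →⋆ₙₐ[ℂ] B`, an `n`-simplex of `HOM(A, B)` is the same as a
continuous map from the topological `n`-simplex to `A →⋆ₙₐ[ℂ] B`, so horn filling amounts to
extending continuous maps from a horn to the whole simplex. This is possible because the horn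
`Λⁿᵢ` is a retract of `Δⁿ`: translating a point towards the vertex `i` until one of its other
coordinates vanishes is a continuous retraction, and compatible maps on the facets `j ≠ i` glue,
along the finite closed cover by these facets, to a continuous map on the horn.
-/

theorem Fin.succAbove_comp_succAbove_pred {n : ℕ} {j k : Fin (n + 2)} (h : j < k) :
    j.succAbove ∘ (k.pred (Fin.ne_zero_of_lt h)).succAbove =
      k.succAbove ∘ (j.castPred (Fin.ne_last_of_lt h)).succAbove := by
  funext x
  ext
  simp only [Function.comp_apply, succAbove, lt_def, val_castSucc, val_pred, coe_castPred,
    apply_ite Fin.val, val_succ]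
  have : j.val < k.val := h
  split_ifs <;> lia

namespace stdSimplex

section Map

variable {S : Type*} [Semiring S] [PartialOrder S] [IsOrderedRing S]
  {ι κ : Type*} [Fintype ι] [Fintype κ] {f : ι → κ}

lemma map_apply_of_injective (hf : f.Injective) (s : stdSimplex S ι) (a : ι) :
    map f s (f a) = s a := by
  classical
  rw [map_coe, FunOnFinite.linearMap_apply_apply, Finset.sum_eq_single_of_mem a (by simp)]
  intro b hb hba
  exact absurd (hf (Finset.mem_filter.1 hb).2) hba

lemma map_apply_of_notMem_range {y : κ} (hy : y ∉ Set.range f) (s : stdSimplex S ι) :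
    map f s y = 0 := by
  classical
  rw [map_coe, FunOnFinite.linearMap_apply_apply, Finset.sum_eq_zero]
  intro a ha
  exact absurd ⟨a, (Finset.mem_filter.1 ha).2⟩ hy

lemma map_invFun_map [Nonempty ι] (hf : f.Injective) (s : stdSimplex S ι) :
    map (Function.invFun f) (map f s) = s := by
  rw [map_comp_apply, (Function.leftInverse_invFun hf).comp_eq_id, map_id_apply]

lemma map_injective [Nonempty ι] (hf : f.Injective) : (map (S := S) f).Injective :=
  Function.LeftInverse.injective (map_invFun_map hf)

lemma exists_map_eq_of_injective (hf : f.Injective) {x : stdSimplex S κ}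
    (hx : ∀ y ∉ Set.range f, x y = 0) : ∃ s, map f s = x := by
  classical
  have hsum : ∑ a, x (f a) = 1 := by
    rw [← sum_eq_one x, ← Finset.sum_subset (Finset.subset_univ (Finset.univ.map ⟨f, hf⟩))]
    · exact (Finset.sum_map Finset.univ ⟨f, hf⟩ x).symm
    intro y _ hy
    exact hx y fun ⟨a, ha⟩ => hy (Finset.mem_map.2 ⟨a, Finset.mem_univ _, ha⟩)
  refine ⟨⟨fun a => x (f a), fun a => zero_le x (f a), hsum⟩, ext (funext fun y => ?_)⟩
  by_cases hy : y ∈ Set.range f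
  · obtain ⟨a, rfl⟩ := hy
    exact map_apply_of_injective hf _ a
  · rw [map_apply_of_notMem_range hy, hx y hy]

end Map

section Faces

variable {S : Type*} [Semiring S] [PartialOrder S] [IsOrderedRing S] {n : ℕ}

lemma map_succAbove_apply_self (j : Fin (n + 1)) (s : stdSimplex S (Fin n)) :
    map j.succAbove s j = 0 :=
  map_apply_of_notMem_range (fun ⟨k, hk⟩ => Fin.succAbove_ne j k hk) s

lemma exists_map_succAbove_eq {j : Fin (n + 1)} {x : stdSimplex S (Fin (n + 1))}
    (hx : x j = 0) : ∃ s, map j.succAbove s = x :=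
  exists_map_eq_of_injective Fin.succAbove_right_injective fun y hy => by
    obtain rfl : y = j := by_contra fun h => hy (Fin.exists_succAbove_eq h)
    exact hx

/-- Two facets of a simplex meet in the codimension-two face. -/
lemma exists_map_succAbove_of_map_succAbove_eq {j k : Fin (n + 2)} (hjk : j < k)
    {s t : stdSimplex S (Fin (n + 1))} (h : map j.succAbove s = map k.succAbove t) :
    ∃ u, map (k.pred (Fin.ne_zero_of_lt hjk)).succAbove u = s ∧
      map (j.castPred (Fin.ne_last_of_lt hjk)).succAbove u = t := by
  have hs : s (k.pred (Fin.ne_zero_of_lt hjk)) = 0 := by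
    rw [← map_apply_of_injective Fin.succAbove_right_injective, Fin.succAbove_pred_of_lt _ _ hjk,
      h, map_succAbove_apply_self]
  obtain ⟨u, rfl⟩ := exists_map_succAbove_eq hs
  refine ⟨u, rfl, map_injective (f := k.succAbove) Fin.succAbove_right_injective ?_⟩
  rw [map_comp_apply, ← Fin.succAbove_comp_succAbove_pred hjk, ← map_comp_apply, h]

end Faces

section HornRetraction

variable {ι : Type*} [Fintype ι] [DecidableEq ι] [Nontrivial ι] (i : ι)

noncomputable def minCoordAway (x : stdSimplex ℝ ι) : ℝ :=
  (Finset.univ.erase i).inf'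
    ((Finset.erase_nonempty (Finset.mem_univ i)).2 Finset.univ_nontrivial) x

lemma minCoordAway_le {x : stdSimplex ℝ ι} {j : ι} (hj : j ≠ i) : minCoordAway i x ≤ x j :=
  Finset.inf'_le _ (Finset.mem_erase.2 ⟨hj, Finset.mem_univ j⟩)

lemma minCoordAway_nonneg (x : stdSimplex ℝ ι) : 0 ≤ minCoordAway i x :=
  Finset.le_inf' _ _ fun j _ => zero_le x j

lemma exists_eq_minCoordAway (x : stdSimplex ℝ ι) : ∃ j ≠ i, x j = minCoordAway i x := by
  obtain ⟨j, hj, h⟩ := Finset.exists_mem_eq_inf'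
    ((Finset.erase_nonempty (Finset.mem_univ i)).2 Finset.univ_nontrivial) x
  exact ⟨j, (Finset.mem_erase.1 hj).1, h.symm⟩

lemma continuous_minCoordAway : Continuous (minCoordAway i) :=
  Continuous.finset_inf'_apply _ fun j _ => (continuous_apply j).comp continuous_subtype_val

/-- Translation of `x` towards the vertex `i` until it hits a facet opposite to some `j ≠ i`:
a retraction of the simplex onto the horn at `i`. -/
noncomputable def hornRetraction (x : stdSimplex ℝ ι) : stdSimplex ℝ ι :=
  ⟨fun j => x j - minCoordAway i x + if j = i then Fintype.card ι * minCoordAway i x else 0, by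
    refine ⟨fun j => ?_, ?_⟩
    · by_cases hj : j = i
      · subst hj
        have : (1 : ℝ) ≤ Fintype.card ι := by exact_mod_cast Fintype.card_pos
        dsimp only
        rw [if_pos rfl]
        nlinarith [minCoordAway_nonneg j x, zero_le x j]
      · simp only [if_neg hj, add_zero, sub_nonneg]
        exact minCoordAway_le i hj
    · simp only
      rw [Finset.sum_add_distrib, Finset.sum_sub_distrib, Finset.sum_ite_eq',
        if_pos (Finset.mem_univ i), Finset.sum_const, Finset.card_univ, nsmul_eq_mul, sum_eq_one]
      ring⟩

lemma hornRetraction_apply (x : stdSimplex ℝ ι) (j : ι) :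
    hornRetraction i x j =
      x j - minCoordAway i x + if j = i then Fintype.card ι * minCoordAway i x else 0 :=
  rfl

lemma continuous_hornRetraction : Continuous (hornRetraction i) := by
  refine Continuous.subtype_mk (continuous_pi fun j => ?_) _
  have hx : Continuous fun x : stdSimplex ℝ ι => x j :=
    (continuous_apply j).comp continuous_subtype_val
  have hm := continuous_minCoordAway i
  split_ifs
  · exact (hx.sub hm).add (continuous_const.mul hm)
  · exact (hx.sub hm).add continuous_const

lemma exists_hornRetraction_eq_zero (x : stdSimplex ℝ ι) :
    ∃ j ≠ i, hornRetraction i x j = 0 := by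
  obtain ⟨j, hj, h⟩ := exists_eq_minCoordAway i x
  exact ⟨j, hj, by rw [hornRetraction_apply, if_neg hj, h]; ring⟩

lemma hornRetraction_eq_self {x : stdSimplex ℝ ι} {j : ι} (hj : j ≠ i) (hx : x j = 0) :
    hornRetraction i x = x := by
  have h0 : minCoordAway i x = 0 :=
    le_antisymm (hx ▸ minCoordAway_le i hj) (minCoordAway_nonneg i x)
  ext k
  simp [hornRetraction_apply, h0]

end HornRetraction

section Gluing

variable {Z : Type*} [TopologicalSpace Z] {n : ℕ} {i : Fin (n + 2)}
  (φ : ∀ j, j ≠ i → C(stdSimplex ℝ (Fin (n + 1)), Z))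

/-- Meaningful on the facet `x j = 0`, where it undoes the face inclusion. -/
noncomputable def faceValue (j : Fin (n + 2)) (hj : j ≠ i) (x : stdSimplex ℝ (Fin (n + 2))) : Z :=
  φ j hj (map (Function.invFun j.succAbove) x)

lemma continuous_faceValue (j : Fin (n + 2)) (hj : j ≠ i) : Continuous (faceValue φ j hj) :=
  (φ j hj).continuous.comp (continuous_map _)

lemma faceValue_map_succAbove (j : Fin (n + 2)) (hj : j ≠ i) (s : stdSimplex ℝ (Fin (n + 1))) :
    faceValue φ j hj (map j.succAbove s) = φ j hj s := by
  rw [faceValue, map_invFun_map Fin.succAbove_right_injective]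

variable {φ}

lemma faceValue_eq
    (hφ : ∀ j hj k hk s t, map j.succAbove s = map k.succAbove t → φ j hj s = φ k hk t)
    {j k : Fin (n + 2)} (hj : j ≠ i) (hk : k ≠ i) {x : stdSimplex ℝ (Fin (n + 2))}
    (hxj : x j = 0) (hxk : x k = 0) : faceValue φ j hj x = faceValue φ k hk x := by
  obtain ⟨s, rfl⟩ := exists_map_succAbove_eq hxj
  obtain ⟨t, hst⟩ := exists_map_succAbove_eq hxk
  rw [faceValue_map_succAbove, ← hst, faceValue_map_succAbove]
  exact hφ j hj k hk s t hst.symm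

theorem exists_extension_of_faces
    (hφ : ∀ j hj k hk s t, map j.succAbove s = map k.succAbove t → φ j hj s = φ k hk t) :
    ∃ Ψ : C(stdSimplex ℝ (Fin (n + 2)), Z), ∀ j hj s, Ψ (map j.succAbove s) = φ j hj s := by
  choose z hz using exists_hornRetraction_eq_zero i
  let Ψ x := faceValue φ (z x) (hz x).1 (hornRetraction i x)
  have hΨ : ∀ j (hj : j ≠ i) x, hornRetraction i x j = 0 →
      Ψ x = faceValue φ j hj (hornRetraction i x) := fun j hj x hx =>
    faceValue_eq hφ _ hj (hz x).2 hx
  refine ⟨⟨Ψ, ?_⟩, fun j hj s => ?_⟩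
  · let C (j : {j // j ≠ i}) : Set (stdSimplex ℝ (Fin (n + 2))) :=
      {x | hornRetraction i x j = 0}
    refine (locallyFinite_of_finite C).continuous
      (Set.iUnion_eq_univ_iff.2 fun x => ⟨⟨z x, (hz x).1⟩, (hz x).2⟩) (fun j => ?_) fun j => ?_
    · exact isClosed_singleton.preimage
        (((continuous_apply _).comp continuous_subtype_val).comp (continuous_hornRetraction i))
    · exact ((continuous_faceValue φ j.1 j.2).comp (continuous_hornRetraction i)).continuousOn.congr
        fun x hx => hΨ j.1 j.2 x hx
  · have hx := map_succAbove_apply_self j s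
    show Ψ _ = _
    rw [hΨ j hj _ (by rwa [hornRetraction_eq_self i hj hx]), hornRetraction_eq_self i hj hx,
      faceValue_map_succAbove]

end Gluing

end stdSimplex

section PointNorm

variable (A B : Type*) [NonUnitalCStarAlgebra A] [NonUnitalCStarAlgebra B]

abbrev pointNormTopology : TopologicalSpace (A →⋆ₙₐ[ℂ] B) :=
  .induced DFunLike.coe inferInstance

attribute [local instance] pointNormTopology

namespace HOMC

def simplexEquiv (n : ℕ) :
    (A →⋆ₙₐ[ℂ] C(SimplexCategory.toTop.{0}.obj ⦋n⦌, B)) ≃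
      C(stdSimplex ℝ (Fin (n + 1)), A →⋆ₙₐ[ℂ] B) where
  toFun φ :=
    { toFun s :=
        { toFun a := φ a (ULift.up s)
          map_smul' c a := DFunLike.congr_fun (map_smul φ c a) _
          map_zero' := DFunLike.congr_fun (map_zero φ) _
          map_add' a b := DFunLike.congr_fun (map_add φ a b) _
          map_mul' a b := DFunLike.congr_fun (map_mul φ a b) _
          map_star' a := DFunLike.congr_fun (map_star φ a) _ }
      continuous_toFun := continuous_induced_rng.2 (continuous_pi fun a =>
        (φ a).continuous.comp continuous_uliftUp) }
  invFun Ψ :=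
    { toFun a := ⟨fun s => Ψ s.down a,
        ((continuous_apply a).comp continuous_induced_dom).comp
          (Ψ.continuous.comp continuous_uliftDown)⟩
      map_smul' c a := by ext; exact map_smul (Ψ _) c a
      map_zero' := by ext; exact map_zero (Ψ _)
      map_add' a b := by ext; exact map_add (Ψ _) a b
      map_mul' a b := by ext; exact map_mul (Ψ _) a b
      map_star' a := by ext; exact map_star (Ψ _) a }
  left_inv _ := rfl
  right_inv _ := rfl

def homEquiv (n : ℕ) : (Δ[n] ⟶ HOMC A B) ≃ C(stdSimplex ℝ (Fin (n + 1)), A →⋆ₙₐ[ℂ] B) :=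
  SSet.yonedaEquiv.trans (simplexEquiv A B n)

variable {A B}

lemma homEquiv_δ_comp {n : ℕ} (g : Δ[n + 1] ⟶ HOMC A B) (j : Fin (n + 2))
    (s : stdSimplex ℝ (Fin (n + 1))) :
    homEquiv A B n (SSet.stdSimplex.δ j ≫ g) s =
      homEquiv A B (n + 1) g (stdSimplex.map j.succAbove s) := by
  show simplexEquiv A B n (SSet.yonedaEquiv (SSet.stdSimplex.δ j ≫ g)) s = _
  rw [SSet.stdSimplex.yonedaEquiv_δ_comp]
  rfl

lemma homEquiv_eq_of_isCompatible {n : ℕ} {i : Fin (n + 2)}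
    {f : ∀ j, j ≠ i → (Δ[n] ⟶ HOMC A B)} (hf : SSet.horn.IsCompatible f)
    {j k : Fin (n + 2)} (hj : j ≠ i) (hk : k ≠ i) {s t : stdSimplex ℝ (Fin (n + 1))}
    (h : stdSimplex.map j.succAbove s = stdSimplex.map k.succAbove t) :
    homEquiv A B n (f j hj) s = homEquiv A B n (f k hk) t := by
  wlog hjk : j < k generalizing j k s t
  · rcases (not_lt.1 hjk).eq_or_lt with rfl | hkj
    · rw [stdSimplex.map_injective Fin.succAbove_right_injective h]
    · exact (this hk hj h.symm hkj).symm
  obtain ⟨n, rfl⟩ : ∃ p, n = p + 1 := Nat.exists_eq_add_one.2 (by omega)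
  obtain ⟨u, rfl, rfl⟩ := stdSimplex.exists_map_succAbove_of_map_succAbove_eq hjk h
  rw [← homEquiv_δ_comp, ← homEquiv_δ_comp, hf.δ_pred_comp j k hj hk hjk]

instance kanComplex : (HOMC A B).KanComplex := by
  refine SSet.KanComplex.iff.2 fun n i f hf => ?_
  obtain ⟨Ψ, hΨ⟩ := stdSimplex.exists_extension_of_faces
    (φ := fun j hj => homEquiv A B n (f j hj))
    fun j hj k hk _ _ h => homEquiv_eq_of_isCompatible hf hj hk h
  refine ⟨(homEquiv A B (n + 1)).symm Ψ, fun j hj => (homEquiv A B n).injective ?_⟩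
  ext s : 1
  rw [homEquiv_δ_comp, Equiv.apply_symm_apply, hΨ]

end HOMC

end PointNorm

/-- `HOM(A, B)` is a Kan complex: for every `n ≥ 1` and `0 ≤ i ≤ n`, every map of
simplicial sets from the horn `Λ[n, i]` to `HOM(A, B)` extends along the inclusion
`Λ[n, i] ↪ Δ[n]`. -/
theorem HOMC_isKan (A B : Type*) [NonUnitalCStarAlgebra A] [NonUnitalCStarAlgebra B] :
    ∀ (n : ℕ), 1 ≤ n → ∀ (i : Fin (n + 1)) (σ₀ : (Λ[n, i] : SSet) ⟶ HOMC A B),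
      ∃ σ : Δ[n] ⟶ HOMC A B, σ₀ = Λ[n, i].ι ≫ σ := by
  intro n hn i σ₀
  obtain ⟨m, rfl⟩ : ∃ m, n = m + 1 := ⟨n - 1, by omega⟩
  exact SSet.KanComplex.hornFilling σ₀

end
end
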